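/- arXiv:2304.00375 — 4 statements merged into one kernel-verified Lean document; each statement's English description precedes it below -/
import Mathlib

section
/- Define J^T(x) = min over control sequences of [∑_{t=0}^{T-1} c(x_t,u_t) + Φ(x_T)] subject to x_{t+1} = f(x_t,u_t), x_0 = x, where Φ ≥ 0. If T' < T and for every state y, Φ(y) ≥ min_u [c(y,u) + Φ(f(y,u))], then J^{T}(x) ≤ J^{T'}(x), i.e., the optimal cost with terminal cost Φ is monotone nonincreasing in the horizon T. -/
/-- Trajectory of the discrete-time system `x_{t+1} = f x_t u_t` from `x` under controls `u`. -/
def traj {X U : Type*} (f : X → U → X) (x : X) (u : ℕ → U) : ℕ → X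
  | 0 => x
  | t + 1 => f (traj f x u t) (u t)

/-- Total cost of horizon `T` with stage cost `c` and terminal cost `Φ`. -/
def cost {X U : Type*} (f : X → U → X) (c : X → U → ℝ) (Φ : X → ℝ)
    (x : X) (u : ℕ → U) (T : ℕ) : ℝ :=
  (∑ t ∈ Finset.range T, c (traj f x u t) (u t)) + Φ (traj f x u T)

/-- Optimal finite-horizon value with terminal cost `Φ`. -/
noncomputable def val {X U : Type*} (f : X → U → X) (c : X → U → ℝ) (Φ : X → ℝ)
    (x : X) (T : ℕ) : ℝ :=
  sInf (Set.range fun u : ℕ → U => cost f c Φ x u T)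

/- Appending to any control sequence one step that realises the decrease condition for `Φ` at
the terminal state produces a horizon-`T + 1` cost no larger than the horizon-`T` cost, so the
infimum can only go down when the horizon grows. -/

section

variable {X U : Type*} (f : X → U → X) (c : X → U → ℝ) (Φ : X → ℝ)

lemma traj_update_of_le (x : X) (u : ℕ → U) (T : ℕ) (v : U) :
    ∀ t ≤ T, traj f x (Function.update u T v) t = traj f x u t
  | 0, _ => rfl
  | t + 1, ht => by
    rw [traj, traj, traj_update_of_le x u T v t (by omega), Function.update_of_ne (by omega)]

lemma cost_succ (x : X) (u : ℕ → U) (T : ℕ) :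
    cost f c Φ x u (T + 1) = (∑ t ∈ Finset.range T, c (traj f x u t) (u t)) +
      (c (traj f x u T) (u T) + Φ (f (traj f x u T) (u T))) := by
  rw [cost, Finset.sum_range_succ, add_assoc, traj]

lemma cost_succ_update_le (x : X) (u : ℕ → U) (T : ℕ) (v : U)
    (hv : c (traj f x u T) v + Φ (f (traj f x u T) v) ≤ Φ (traj f x u T)) :
    cost f c Φ x (Function.update u T v) (T + 1) ≤ cost f c Φ x u T := by
  have hprefix : ∀ t ∈ Finset.range T, c (traj f x (Function.update u T v) t)
      (Function.update u T v t) = c (traj f x u t) (u t) := fun t ht => by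
    have ht : t < T := Finset.mem_range.mp ht
    rw [traj_update_of_le f x u T v t ht.le, Function.update_of_ne ht.ne]
  rw [cost_succ, cost, Finset.sum_congr rfl hprefix, Function.update_self,
    traj_update_of_le f x u T v T le_rfl]
  gcongr

lemma bddBelow_range_cost (hc : ∀ x u, 0 ≤ c x u) (hΦ : ∀ x, 0 ≤ Φ x) (x : X) (T : ℕ) :
    BddBelow (Set.range fun u : ℕ → U => cost f c Φ x u T) := by
  refine ⟨0, ?_⟩
  rintro _ ⟨u, rfl⟩
  exact add_nonneg (Finset.sum_nonneg fun t _ => hc _ _) (hΦ _)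

lemma val_succ_le (hc : ∀ x u, 0 ≤ c x u) (hΦ : ∀ x, 0 ≤ Φ x)
    (hCLF : ∀ y, ∃ u, c y u + Φ (f y u) ≤ Φ y) (x : X) (T : ℕ) :
    val f c Φ x (T + 1) ≤ val f c Φ x T := by
  obtain ⟨u₀, -⟩ := hCLF x
  refine le_csInf ⟨_, fun u => u₀, rfl⟩ ?_
  rintro _ ⟨u, rfl⟩
  obtain ⟨v, hv⟩ := hCLF (traj f x u T)
  exact (csInf_le (bddBelow_range_cost f c Φ hc hΦ x (T + 1)) ⟨_, rfl⟩).trans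
    (cost_succ_update_le f c Φ x u T v hv)

end

theorem stmt_3_general {X U : Type*}
    (f : X → U → X) (c : X → U → ℝ) (Φ : X → ℝ)
    (hc : ∀ x u, 0 ≤ c x u) (hΦ : ∀ x, 0 ≤ Φ x)
    (hCLF : ∀ y, ∃ u, c y u + Φ (f y u) ≤ Φ y)
    (x : X) (T' T : ℕ) (hT : T' < T) :
    val f c Φ x T ≤ val f c Φ x T' :=
  antitone_nat_of_succ_le (fun T => val_succ_le f c Φ hc hΦ hCLF x T) hT.le

/-- If the terminal cost `Φ` satisfies the one-step control-Lyapunov decrease condition,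
then the optimal finite-horizon value is nonincreasing in the horizon. -/
theorem stmt_3 {X U : Type*} [Nonempty U]
    (f : X → U → X) (c : X → U → ℝ) (Φ : X → ℝ)
    (hc : ∀ x u, 0 ≤ c x u) (hΦ : ∀ x, 0 ≤ Φ x)
    (hCLF : ∀ y, ∃ u, c y u + Φ (f y u) ≤ Φ y)
    (x : X) (T' T : ℕ) (hT : T' < T) :
    val f c Φ x T ≤ val f c Φ x T' :=
  stmt_3_general f c Φ hc hΦ hCLF x T' T hT
end

section
/- Suppose J : X → ℝ≥0 satisfies J(x) = min_u [c(x,u) + J(f(x,u))] for all x outside a set Ω, c(x,u) ≥ Δ > 0 for all x ∉ Ω and all u, and J < ∞. Then any trajectory following the Bellman-optimal control from x ∉ Ω enters Ω within at most ⌈J(x)/Δ⌉ steps. -/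
section DecreasingSequence

variable {V : ℕ → ℝ} {P : ℕ → Prop} {Δ : ℝ}

theorem add_mul_le_of_forall_lt_not (hstep : ∀ t, ¬ P t → V (t + 1) + Δ ≤ V t) :
    ∀ n : ℕ, (∀ t < n, ¬ P t) → V n + n * Δ ≤ V 0
  | 0, _ => by simp
  | n + 1, hn => by
    have hprev := add_mul_le_of_forall_lt_not hstep n fun t ht => hn t (by omega)
    have hlast := hstep n (hn n n.lt_succ_self)
    push_cast
    linarith

theorem exists_le_ceil_div_of_forall_not_add_le (hΔ : 0 < Δ) (hV : ∀ t, 0 ≤ V t)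
    (hstep : ∀ t, ¬ P t → V (t + 1) + Δ ≤ V t) : ∃ t ≤ ⌈V 0 / Δ⌉₊, P t := by
  by_contra! hnot
  set N := ⌈V 0 / Δ⌉₊
  have hdrop := add_mul_le_of_forall_lt_not hstep (N + 1) fun t ht => hnot t (by omega)
  have hbound : ((N + 1 : ℕ) : ℝ) ≤ V 0 / Δ := by
    rw [le_div_iff₀ hΔ]
    linarith [hV (N + 1)]
  have hceil : V 0 / Δ ≤ N := Nat.le_ceil _
  push_cast at hbound
  linarith

end DecreasingSequence

theorem stmt_12_general {X U : Type*}
    (f : X → U → X) (c : X → U → ℝ) (J : X → ℝ) (Ω : Set X) (Δ : ℝ)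
    (hΔ : 0 < Δ)
    (hJ_nonneg : ∀ y, 0 ≤ J y)
    (hc_low : ∀ y u, y ∉ Ω → Δ ≤ c y u)
    (x : ℕ → X) (u : ℕ → U)
    (hopt : ∀ t, x t ∉ Ω →
      J (x t) = c (x t) (u t) + J (x (t + 1)) ∧ ∀ u', J (x t) ≤ c (x t) u' + J (f (x t) u')) :
    ∃ t : ℕ, t ≤ ⌈J (x 0) / Δ⌉₊ ∧ x t ∈ Ω := by
  refine exists_le_ceil_div_of_forall_not_add_le hΔ (fun t => hJ_nonneg (x t)) fun t ht => ?_
  have hbellman := (hopt t ht).1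
  have hcost := hc_low (x t) (u t) ht
  linarith

/-- If `J ≥ 0` satisfies the Bellman equation outside `Ω` (with the minimizing control
followed along the trajectory), and the stage cost is at least `Δ > 0` outside `Ω`, then
the Bellman-optimal trajectory from `x₀ ∉ Ω` enters `Ω` within `⌈J(x₀)/Δ⌉` steps. -/
theorem stmt_12 {X U : Type*}
    (f : X → U → X) (c : X → U → ℝ) (J : X → ℝ) (Ω : Set X) (Δ : ℝ)
    (hΔ : 0 < Δ)
    (hJ_nonneg : ∀ y, 0 ≤ J y)
    (hc_low : ∀ y u, y ∉ Ω → Δ ≤ c y u)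
    (hbellmin : ∀ y ∉ Ω, ∃ u, J y = c y u + J (f y u) ∧ ∀ u', J y ≤ c y u' + J (f y u'))
    (x : ℕ → X) (u : ℕ → U)
    (hx0 : x 0 ∉ Ω)
    (hdyn : ∀ t, x (t + 1) = f (x t) (u t))
    (hopt : ∀ t, x t ∉ Ω →
      J (x t) = c (x t) (u t) + J (x (t + 1)) ∧ ∀ u', J (x t) ≤ c (x t) u' + J (f (x t) u')) :
    ∃ t : ℕ, t ≤ ⌈J (x 0) / Δ⌉₊ ∧ x t ∈ Ω :=
  stmt_12_general f c J Ω Δ hΔ hJ_nonneg hc_low x u hopt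
end

section
/- Let Ω be contained in the region of attraction D of a feedback law κ (i.e., for every y ∈ Ω the closed-loop trajectory y_{t+1} = f(y_t, κ(y_t)) converges to 0 and stays in D), and suppose a value function J satisfies the Bellman equation with positive stage cost outside Ω, so that every optimal trajectory from any x reaches Ω in finite time. Then under the combined policy (Bellman-optimal control outside Ω, κ inside Ω), every trajectory converges to the origin; i.e., the origin is globally attractive. -/
/-!
Outside `Ω` the Bellman equation makes `J` drop by at least `Δ > 0` along the optimal
trajectory; since `J ≥ 0`, this can only happen finitely often, so the trajectory enters `Ω`.
From then on it is a closed-loop trajectory of `κ` started in `Ω ⊆ D`, which converges to `0`.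
-/

theorem add_nsmul_le_of_forall_add_le {α : Type*} [AddCommMonoid α] [PartialOrder α]
    [IsOrderedAddMonoid α] {v : ℕ → α} {Δ : α} (hdec : ∀ n, v (n + 1) + Δ ≤ v n) (n : ℕ) :
    v n + n • Δ ≤ v 0 := by
  induction n with
  | zero => simp
  | succ n ih =>
    calc v (n + 1) + (n + 1) • Δ = (v (n + 1) + Δ) + n • Δ := by rw [succ_nsmul']; abel
      _ ≤ v n + n • Δ := by gcongr; exact hdec n
      _ ≤ v 0 := ih

theorem not_forall_add_le_of_nonneg {α : Type*} [AddCommGroup α] [LinearOrder α]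
    [IsOrderedAddMonoid α] [Archimedean α] {v : ℕ → α} {Δ : α} (hΔ : 0 < Δ)
    (hv : ∀ n, 0 ≤ v n) : ¬ ∀ n, v (n + 1) + Δ ≤ v n := by
  intro hdec
  obtain ⟨n, hn⟩ := Archimedean.arch (v 0 + Δ) hΔ
  have : v 0 + Δ ≤ v 0 :=
    calc v 0 + Δ ≤ n • Δ := hn
      _ ≤ v n + n • Δ := le_add_of_nonneg_left (hv n)
      _ ≤ v 0 := add_nsmul_le_of_forall_add_le hdec n
  exact hΔ.not_ge ((add_le_iff_nonpos_right _).mp this)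

theorem exists_mem_of_bellman {X U : Type*} {f : X → U → X} {π : X → U} {Ω : Set X}
    {J : X → ℝ} {c : X → U → ℝ} {Δ : ℝ} (hΔ : 0 < Δ) (hc_low : ∀ y u, y ∉ Ω → Δ ≤ c y u)
    (hJ_nonneg : ∀ y, 0 ≤ J y) (hbell : ∀ y ∉ Ω, J y = c y (π y) + J (f y (π y)))
    {x : ℕ → X} (hstep : ∀ t, (∀ s ≤ t, x s ∉ Ω) → x (t + 1) = f (x t) (π (x t))) :
    ∃ s, x s ∈ Ω := by
  by_contra! hout
  refine not_forall_add_le_of_nonneg hΔ (fun n => hJ_nonneg (x n)) fun n => ?_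
  have hbell_n := hbell _ (hout n)
  rw [← hstep n fun s _ => hout s] at hbell_n
  linarith [hc_low (x n) (π (x n)) (hout n)]

theorem eq_iterate_of_forall_ge {α : Type*} {g : α → α} {x : ℕ → α} {s : ℕ}
    (hx : ∀ t ≥ s, x (t + 1) = g (x t)) (k : ℕ) : x (s + k) = g^[k] (x s) := by
  induction k with
  | zero => rfl
  | succ k ih =>
    rw [← add_assoc, hx _ (Nat.le_add_right s k), ih, Function.iterate_succ_apply']

theorem tendsto_of_eventually_iterate {α : Type*} {g : α → α} {x : ℕ → α} {s : ℕ}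
    {l : Filter α} (hx : ∀ t ≥ s, x (t + 1) = g (x t))
    (hg : Filter.Tendsto (fun k => g^[k] (x s)) Filter.atTop l) :
    Filter.Tendsto x Filter.atTop l := by
  refine (Filter.tendsto_add_atTop_iff_nat s).mp (hg.congr fun k => ?_)
  rw [add_comm, eq_iterate_of_forall_ge hx]

open Classical in
theorem stmt_13_general {X U : Type*} [TopologicalSpace X] [Zero X]
    (f : X → U → X) (κ : X → U) (π : X → U) (Ω D : Set X)
    (J : X → ℝ) (c : X → U → ℝ) (Δ : ℝ)
    (hΩD : Ω ⊆ D)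
    (hattr : ∀ y ∈ D,
      Filter.Tendsto (fun t => (fun z => f z (κ z))^[t] y) Filter.atTop (nhds 0))
    (hΔ : 0 < Δ)
    (hc_low : ∀ y u, y ∉ Ω → Δ ≤ c y u)
    (hJ_nonneg : ∀ y, 0 ≤ J y)
    (hbell : ∀ y ∉ Ω, J y = c y (π y) + J (f y (π y)))
    (x : ℕ → X)
    (hdyn : ∀ t, x (t + 1) =
      if ∃ s ≤ t, x s ∈ Ω then f (x t) (κ (x t)) else f (x t) (π (x t))) :
    Filter.Tendsto x Filter.atTop (nhds 0) := by
  obtain ⟨s, hs⟩ := exists_mem_of_bellman (x := x) hΔ hc_low hJ_nonneg hbell fun t hout => by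
    rw [hdyn, if_neg fun ⟨s, hst, hs⟩ => hout s hst hs]
  have hκ : ∀ t ≥ s, x (t + 1) = f (x t) (κ (x t)) := fun t hst => by
    rw [hdyn, if_pos ⟨s, hst, hs⟩]
  exact tendsto_of_eventually_iterate hκ (hattr _ (hΩD hs))

open Classical in
/-- Global attractivity of the origin under the combined policy: Bellman-optimal control
`π` outside `Ω` (which, since `J` satisfies the Bellman equation with stage cost at least
`Δ > 0` outside `Ω`, forces the trajectory to reach `Ω` in finite time) and the feedback
`κ` once `Ω` (contained in the region of attraction `D` of `κ`) has been reached. -/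
theorem stmt_13 {X U : Type*} [TopologicalSpace X] [Zero X]
    (f : X → U → X) (κ : X → U) (π : X → U) (Ω D : Set X)
    (J : X → ℝ) (c : X → U → ℝ) (Δ : ℝ)
    (hΩD : Ω ⊆ D)
    (hinv : ∀ y ∈ D, f y (κ y) ∈ D)
    (hattr : ∀ y ∈ D,
      Filter.Tendsto (fun t => (fun z => f z (κ z))^[t] y) Filter.atTop (nhds 0))
    (hΔ : 0 < Δ)
    (hc_low : ∀ y u, y ∉ Ω → Δ ≤ c y u)
    (hJ_nonneg : ∀ y, 0 ≤ J y)
    (hbell : ∀ y ∉ Ω, J y = c y (π y) + J (f y (π y)))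
    (x : ℕ → X)
    (hdyn : ∀ t, x (t + 1) =
      if ∃ s ≤ t, x s ∈ Ω then f (x t) (κ (x t)) else f (x t) (π (x t))) :
    Filter.Tendsto x Filter.atTop (nhds 0) :=
  stmt_13_general f κ π Ω D J c Δ hΩD hattr hΔ hc_low hJ_nonneg hbell x hdyn
end

section
/- If V : X → ℝ≥0 satisfies |V(y) − J*(y)| ≤ ε(M) for all y with V(y) ≤ M, where ε(M) → 0 as M → 0, and J^M(x) denotes the free-final-time value with terminal cost max(V(·), M), then under the finite-hitting-time and DP-principle hypotheses, |J^M(x) − J*(x)| ≤ ε(M) + M, and hence J^M(x) → J*(x) as M → 0. -/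
/-- Free-final-time value with terminal cost `max (V ·) M`. -/
noncomputable def valM {X U : Type*} (f : X → U → X) (c : X → U → ℝ) (V : X → ℝ)
    (M : ℝ) (x : X) : ℝ :=
  sInf (Set.range fun p : ℕ × (ℕ → U) => cost f c (fun y => max (V y) M) x p.2 p.1)

section Bounds

variable {X U : Type*} {f : X → U → X} {c : X → U → ℝ}

theorem cost_nonneg (hc : ∀ x u, 0 ≤ c x u) {Φ : X → ℝ} (hΦ : ∀ y, 0 ≤ Φ y)
    (x : X) (u : ℕ → U) (T : ℕ) : 0 ≤ cost f c Φ x u T :=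
  add_nonneg (Finset.sum_nonneg fun _ _ => hc _ _) (hΦ _)

theorem val_le_cost (hc : ∀ x u, 0 ≤ c x u) {Φ : X → ℝ} (hΦ : ∀ y, 0 ≤ Φ y)
    (x : X) (u : ℕ → U) (T : ℕ) : val f c Φ x T ≤ cost f c Φ x u T :=
  csInf_le ⟨0, by rintro _ ⟨v, rfl⟩; exact cost_nonneg hc hΦ x v T⟩ ⟨u, rfl⟩

theorem valM_le_cost (hc : ∀ x u, 0 ≤ c x u) {V : X → ℝ} {M : ℝ} (hM : 0 ≤ M)
    (x : X) (u : ℕ → U) (T : ℕ) : valM f c V M x ≤ cost f c (fun y => max (V y) M) x u T := by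
  refine csInf_le ⟨0, ?_⟩ ⟨(T, u), rfl⟩
  rintro _ ⟨p, rfl⟩
  exact cost_nonneg hc (fun _ => le_max_of_le_right hM) x p.2 p.1

theorem valM_le_add (hc : ∀ x u, 0 ≤ c x u) {V J : X → ℝ} {M : ℝ} (hM : 0 ≤ M)
    {x : X} {u : ℕ → U} {T : ℕ} (hJ : 0 ≤ J (traj f x u T)) (hopt : cost f c J x u T = J x)
    (hVT : V (traj f x u T) ≤ M) : valM f c V M x ≤ J x + M := by
  have hle := valM_le_cost (f := f) (V := V) hc hM x u T
  simp only [cost, max_eq_right hVT] at hle hopt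
  linarith

theorem sub_le_valM (hc : ∀ x u, 0 ≤ c x u) {V J : X → ℝ} (hJ : ∀ y, 0 ≤ J y)
    {M e : ℝ} {x : X} {u : ℕ → U} {T : ℕ} (hDP : J x = val f c J x T)
    (hopt : cost f c (fun y => max (V y) M) x u T = valM f c V M x)
    (happrox : |V (traj f x u T) - J (traj f x u T)| ≤ e) : J x - e ≤ valM f c V M x := by
  have hJx : J x ≤ cost f c J x u T := hDP ▸ val_le_cost hc hJ x u T
  have hVJ := (abs_le.mp happrox).1
  have hmax := le_max_left (V (traj f x u T)) M
  simp only [cost] at hJx hopt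
  linarith

end Bounds

theorem stmt_15_general {X U : Type*}
    (f : X → U → X) (c : X → U → ℝ) (V : X → ℝ) (Jstar : X → ℝ) (ε : ℝ → ℝ)
    (hc_nonneg : ∀ x u, 0 ≤ c x u) (hJstar : ∀ x, 0 ≤ Jstar x)
    (hDP : ∀ y T, Jstar y = val f c Jstar y T)
    (happrox : ∀ M > (0 : ℝ), ∀ y, V y ≤ M → |V y - Jstar y| ≤ ε M)
    (hεlim : Filter.Tendsto ε (nhdsWithin 0 (Set.Ioi 0)) (nhds 0))
    (x : X)
    (hhit : ∀ M > (0 : ℝ), ∃ (T : ℕ) (u : ℕ → U),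
      cost f c (fun y => max (V y) M) x u T = valM f c V M x ∧ V (traj f x u T) ≤ M)
    (hstarhit : ∀ M > (0 : ℝ), ∃ ustar : ℕ → U,
      (∀ T : ℕ, (∑ t ∈ Finset.range T, c (traj f x ustar t) (ustar t))
          + Jstar (traj f x ustar T) = Jstar x) ∧
      ∃ T : ℕ, V (traj f x ustar T) ≤ M) :
    (∀ M > (0 : ℝ), |valM f c V M x - Jstar x| ≤ ε M + M) ∧
    Filter.Tendsto (fun M => valM f c V M x) (nhdsWithin 0 (Set.Ioi 0))
      (nhds (Jstar x)) := by
  have hbound : ∀ M > (0 : ℝ), |valM f c V M x - Jstar x| ≤ ε M + M := by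
    intro M hM
    obtain ⟨T, u, hopt, hVT⟩ := hhit M hM
    obtain ⟨ustar, hBellman, T', hVT'⟩ := hstarhit M hM
    have hlower := sub_le_valM hc_nonneg hJstar (hDP x T) hopt (happrox M hM _ hVT)
    have hupper := valM_le_add hc_nonneg hM.le (hJstar _) (hBellman T') hVT'
    have hε : 0 ≤ ε M := (abs_nonneg _).trans (happrox M hM _ hVT)
    rw [abs_le]
    constructor <;> linarith
  refine ⟨hbound, ?_⟩
  have hε_add : Filter.Tendsto (fun M => ε M + M) (nhdsWithin 0 (Set.Ioi 0)) (nhds 0) := by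
    simpa using hεlim.add (tendsto_nhdsWithin_of_tendsto_nhds Filter.tendsto_id)
  rw [tendsto_iff_norm_sub_tendsto_zero]
  refine squeeze_zero' (Filter.Eventually.of_forall fun _ => norm_nonneg _) ?_ hε_add
  filter_upwards [self_mem_nhdsWithin] with M hM
  exact hbound M hM

/-- If `V` approximates `J*` within `ε(M)` on the sublevel set `{V ≤ M}`, with
`ε(M) → 0` as `M → 0`, then under the finite-hitting-time and dynamic-programming
hypotheses, `|J^M(x) − J*(x)| ≤ ε(M) + M`, and hence `J^M(x) → J*(x)` as `M → 0⁺`. -/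
theorem stmt_15 {X U : Type*} [Nonempty U]
    (f : X → U → X) (c : X → U → ℝ) (V : X → ℝ) (Jstar : X → ℝ) (ε : ℝ → ℝ)
    (hc_nonneg : ∀ x u, 0 ≤ c x u) (hV : ∀ x, 0 ≤ V x) (hJstar : ∀ x, 0 ≤ Jstar x)
    (hDP : ∀ y T, Jstar y = val f c Jstar y T)
    (happrox : ∀ M > (0 : ℝ), ∀ y, V y ≤ M → |V y - Jstar y| ≤ ε M)
    (hεlim : Filter.Tendsto ε (nhdsWithin 0 (Set.Ioi 0)) (nhds 0))
    (x : X)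
    (hhit : ∀ M > (0 : ℝ), ∃ (T : ℕ) (u : ℕ → U),
      cost f c (fun y => max (V y) M) x u T = valM f c V M x ∧ V (traj f x u T) ≤ M)
    (hstarhit : ∀ M > (0 : ℝ), ∃ ustar : ℕ → U,
      (∀ T : ℕ, (∑ t ∈ Finset.range T, c (traj f x ustar t) (ustar t))
          + Jstar (traj f x ustar T) = Jstar x) ∧
      ∃ T : ℕ, V (traj f x ustar T) ≤ M) :
    (∀ M > (0 : ℝ), |valM f c V M x - Jstar x| ≤ ε M + M) ∧
    Filter.Tendsto (fun M => valM f c V M x) (nhdsWithin 0 (Set.Ioi 0))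
      (nhds (Jstar x)) :=
  stmt_15_general f c V Jstar ε hc_nonneg hJstar hDP happrox hεlim x hhit hstarhit
end
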